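/- In the setting of the three-step estimation, define $\xi_c = X_- M_{(\iota_T,\,\xi_\beta')}$, $\xi_d = X_- M_{(\iota_T,\,X')}$, $\xi_\beta = X M_{Z_-}$ where $Z_- = (\iota_T', X_-')'$, and let $\hat{c} = (\xi_c\xi_c')^{-1}\xi_c R'$, $\hat{d} = (\xi_d\xi_d')^{-1}\xi_d R'$, $\hat\beta = (\xi_\beta\xi_\beta')^{-1}\xi_\beta R'$, $\hat\Phi = (X_- M_{\iota_T} X_-')^{-1} X_- M_{\iota_T} X'$. Assuming all inverted matrices are invertible, the identity $M_{\iota_T} X_-'(X_- M_{\iota_T} X_-')^{-1} = \xi_\beta'(\xi_\beta\xi_\beta')^{-1}\hat\Phi' + \xi_d'(\xi_d\xi_d')^{-1}$ holds, which implies $\hat{c} = \hat{d} + \hat\Phi\,\hat\beta$ (i.e., the two three-step estimation procedures of Adrian et al. (2013) are numerically identical). -/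

import Mathlib

open Matrix

/-- Projection matrix onto the row space of the regressor matrix `A` (rows = regressors):
`P_{A'} = A'(AA')⁻¹A`. -/
noncomputable def proj14 {l : Type*} [Fintype l] [DecidableEq l] {T : ℕ}
    (A : Matrix l (Fin T) ℝ) : Matrix (Fin T) (Fin T) ℝ :=
  Aᵀ * (A * Aᵀ)⁻¹ * A

/-- Annihilator matrix `M_{A'} = I_T - A'(AA')⁻¹A`. -/
noncomputable def annih14 {l : Type*} [Fintype l] [DecidableEq l] {T : ℕ}
    (A : Matrix l (Fin T) ℝ) : Matrix (Fin T) (Fin T) ℝ :=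
  1 - proj14 A

section Aux
variable {l m : Type*} [Fintype l] [DecidableEq l] [Fintype m] [DecidableEq m] {T : ℕ}

lemma proj14_transpose (A : Matrix l (Fin T) ℝ) : (proj14 A)ᵀ = proj14 A := by
  unfold proj14
  rw [transpose_mul, transpose_mul, transpose_transpose, transpose_nonsing_inv,
    transpose_mul, transpose_transpose, Matrix.mul_assoc]

lemma annih14_transpose (A : Matrix l (Fin T) ℝ) : (annih14 A)ᵀ = annih14 A := by
  unfold annih14
  rw [transpose_sub, transpose_one, proj14_transpose]

lemma mul_annih14_self (A : Matrix l (Fin T) ℝ) (h : IsUnit (A * Aᵀ).det) :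
    A * annih14 A = 0 := by
  unfold annih14 proj14
  rw [Matrix.mul_sub, Matrix.mul_one, ← Matrix.mul_assoc, ← Matrix.mul_assoc,
    Matrix.mul_nonsing_inv _ h, Matrix.one_mul, sub_self]

lemma annih14_mul_transpose (A : Matrix l (Fin T) ℝ) (h : IsUnit (A * Aᵀ).det) :
    annih14 A * Aᵀ = 0 := by
  have := congrArg Matrix.transpose (mul_annih14_self A h)
  simpa [transpose_mul, annih14_transpose] using this

lemma proj14_mul_annih14 (A : Matrix l (Fin T) ℝ) (h : IsUnit (A * Aᵀ).det) :
    proj14 A * annih14 A = 0 := by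
  unfold proj14
  rw [Matrix.mul_assoc, mul_annih14_self A h, Matrix.mul_zero]

lemma annih14_idem (A : Matrix l (Fin T) ℝ) (h : IsUnit (A * Aᵀ).det) :
    annih14 A * annih14 A = annih14 A := by
  calc annih14 A * annih14 A = (1 - proj14 A) * annih14 A := rfl
    _ = annih14 A - proj14 A * annih14 A := by rw [Matrix.sub_mul, Matrix.one_mul]
    _ = annih14 A := by rw [proj14_mul_annih14 A h, sub_zero]

/-- Frisch–Waugh–Lovell style decomposition of the annihilator of stacked regressors. -/
lemma annih14_fromRows (A : Matrix l (Fin T) ℝ) (B : Matrix m (Fin T) ℝ)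
    (hA : IsUnit (A * Aᵀ).det)
    (hW : IsUnit (fromRows A B * (fromRows A B)ᵀ).det)
    (hG : IsUnit (B * annih14 A * (B * annih14 A)ᵀ).det) :
    annih14 (fromRows A B)
      = annih14 A
        - (B * annih14 A)ᵀ * (B * annih14 A * (B * annih14 A)ᵀ)⁻¹ * (B * annih14 A) := by
  set Q := annih14 A with hQdef
  set G := B * Q with hGdef
  set W := fromRows A B with hWdef
  clear_value Q G W
  have hQt : Qᵀ = Q := by rw [hQdef]; exact annih14_transpose A
  have hQA : Q * Aᵀ = 0 := by rw [hQdef]; exact annih14_mul_transpose A hA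
  have hQQ : Q * Q = Q := by rw [hQdef]; exact annih14_idem A hA
  have hGt : Gᵀ = Q * Bᵀ := by rw [hGdef, transpose_mul, hQt]
  have hGA : G * Aᵀ = 0 := by rw [hGdef, Matrix.mul_assoc, hQA, Matrix.mul_zero]
  have hGB : G * Bᵀ = G * Gᵀ := by
    rw [hGt, hGdef, Matrix.mul_assoc, Matrix.mul_assoc, ← Matrix.mul_assoc Q Q Bᵀ, hQQ]
  set N := proj14 W with hNdef
  set P := proj14 A + Gᵀ * (G * Gᵀ)⁻¹ * G with hPdef
  clear_value N P
  have hNt : Nᵀ = N := by rw [hNdef]; exact proj14_transpose W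
  have hPt : Pᵀ = P := by
    have h2 : (Gᵀ * (G * Gᵀ)⁻¹ * G)ᵀ = Gᵀ * (G * Gᵀ)⁻¹ * G := proj14_transpose G
    rw [hPdef, transpose_add, proj14_transpose, h2]
  have hNW : N * Wᵀ = Wᵀ := by
    rw [hNdef]; unfold proj14
    calc Wᵀ * (W * Wᵀ)⁻¹ * W * Wᵀ = Wᵀ * ((W * Wᵀ)⁻¹ * (W * Wᵀ)) := by
          simp only [Matrix.mul_assoc]
      _ = Wᵀ := by rw [Matrix.nonsing_inv_mul _ hW, Matrix.mul_one]
  have hNAB : N * Aᵀ = Aᵀ ∧ N * Bᵀ = Bᵀ := by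
    have h := hNW
    rw [hWdef, transpose_fromRows, mul_fromCols] at h
    exact fromCols_inj h
  obtain ⟨hNA, hNB⟩ := hNAB
  have hprojA_A : proj14 A * Aᵀ = Aᵀ := by
    unfold proj14
    calc Aᵀ * (A * Aᵀ)⁻¹ * A * Aᵀ = Aᵀ * ((A * Aᵀ)⁻¹ * (A * Aᵀ)) := by
          simp only [Matrix.mul_assoc]
      _ = Aᵀ := by rw [Matrix.nonsing_inv_mul _ hA, Matrix.mul_one]
  have hPA : P * Aᵀ = Aᵀ := by
    rw [hPdef, Matrix.add_mul, hprojA_A, Matrix.mul_assoc, hGA, Matrix.mul_zero, add_zero]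
  have hsandG : Gᵀ * (G * Gᵀ)⁻¹ * G * Bᵀ = Gᵀ := by
    calc Gᵀ * (G * Gᵀ)⁻¹ * G * Bᵀ = Gᵀ * (G * Gᵀ)⁻¹ * (G * Bᵀ) := by rw [Matrix.mul_assoc]
      _ = Gᵀ * ((G * Gᵀ)⁻¹ * (G * Gᵀ)) := by rw [hGB, Matrix.mul_assoc]
      _ = Gᵀ := by rw [Matrix.nonsing_inv_mul _ hG, Matrix.mul_one]
  have hPB : P * Bᵀ = Bᵀ := by
    rw [hPdef, Matrix.add_mul, hsandG, hGt, hQdef]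
    unfold annih14
    rw [Matrix.sub_mul, Matrix.one_mul]
    abel
  have hPW : P * Wᵀ = Wᵀ := by
    rw [hWdef, transpose_fromRows, mul_fromCols, hPA, hPB]
  have hPN : P * N = N := by
    rw [hNdef]; unfold proj14
    calc P * (Wᵀ * (W * Wᵀ)⁻¹ * W) = P * Wᵀ * ((W * Wᵀ)⁻¹ * W) := by
          simp only [Matrix.mul_assoc]
      _ = Wᵀ * (W * Wᵀ)⁻¹ * W := by rw [hPW, Matrix.mul_assoc]
  have hNprojA : N * proj14 A = proj14 A := by
    unfold proj14
    calc N * (Aᵀ * (A * Aᵀ)⁻¹ * A) = N * Aᵀ * ((A * Aᵀ)⁻¹ * A) := by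
          simp only [Matrix.mul_assoc]
      _ = Aᵀ * (A * Aᵀ)⁻¹ * A := by rw [hNA, Matrix.mul_assoc]
  have hNG : N * Gᵀ = Gᵀ := by
    have e : Gᵀ = Bᵀ - proj14 A * Bᵀ := by
      rw [hGt, hQdef]
      unfold annih14
      rw [Matrix.sub_mul, Matrix.one_mul]
    have e2 : N * (proj14 A * Bᵀ) = proj14 A * Bᵀ := by
      unfold proj14
      calc N * (Aᵀ * (A * Aᵀ)⁻¹ * A * Bᵀ) = N * Aᵀ * ((A * Aᵀ)⁻¹ * (A * Bᵀ)) := by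
            simp only [Matrix.mul_assoc]
        _ = Aᵀ * (A * Aᵀ)⁻¹ * A * Bᵀ := by rw [hNA]; simp only [Matrix.mul_assoc]
    rw [e, Matrix.mul_sub, e2, hNB]
  have hNP : N * P = P := by
    rw [hPdef, Matrix.mul_add, hNprojA]
    congr 1
    calc N * (Gᵀ * (G * Gᵀ)⁻¹ * G) = N * Gᵀ * ((G * Gᵀ)⁻¹ * G) := by
          rw [Matrix.mul_assoc Gᵀ _ G, ← Matrix.mul_assoc N Gᵀ _]
      _ = Gᵀ * (G * Gᵀ)⁻¹ * G := by rw [hNG, Matrix.mul_assoc]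
  have hNPeq : N = P := by
    have h1 : (P * N)ᵀ = P := by rw [transpose_mul, hNt, hPt, hNP]
    calc N = P * N := hPN.symm
      _ = ((P * N)ᵀ)ᵀ := (transpose_transpose _).symm
      _ = Pᵀ := by rw [h1]
      _ = P := hPt
  have hfin : annih14 W = 1 - N := by rw [hNdef]; rfl
  rw [hfin, hNPeq, hPdef, hQdef]
  unfold annih14
  abel

omit [Fintype l] [DecidableEq l] in
/-- helper: sandwiched idempotent. -/
lemma midem14 {p : Type*} [Fintype p]
    (M : Matrix l (Fin T) ℝ) (P : Matrix (Fin T) (Fin T) ℝ) (N : Matrix (Fin T) p ℝ)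
    (h : P * P = P) : M * P * (P * N) = M * (P * N) := by
  rw [← Matrix.mul_assoc, Matrix.mul_assoc M P P, h, Matrix.mul_assoc]

end Aux

lemma stmt14L1 {R : Type*} [Ring R] (A A' B B' C D E E' F : R)
    (hA : A * A' = 1) (hB : B' * B = 1) (hE : E = B - D * A' * C) (hEE : E * E' = 1)
    (hF : F = A - C * B' * D) :
    F * (A' + A' * (C * (E' * (D * A')))) = 1 := by
  have h1 : D * A' * C = B - E := by rw [hE, sub_sub_cancel]
  calc F * (A' + A' * (C * (E' * (D * A'))))
      = A * A' + (A * A') * (C * E' * (D * A')) - C * B' * (D * A')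
          - C * B' * (D * A' * C) * (E' * (D * A')) := by rw [hF]; noncomm_ring
    _ = 1 + 1 * (C * E' * (D * A')) - C * B' * (D * A')
          - C * B' * (B - E) * (E' * (D * A')) := by rw [hA, h1]
    _ = 1 + C * E' * (D * A') - C * B' * (D * A')
          - (C * ((B' * B) * (E' * (D * A'))) - C * (B' * (E * E') * (D * A'))) := by
        noncomm_ring
    _ = 1 := by rw [hB, hEE]; noncomm_ring

lemma stmt14L2 {R : Type*} [Ring R] (A A' B B' C D E E' F F' : R)
    (hA' : A' * A = 1) (hBB : B * B' = 1) (hE : E = B - D * A' * C) (hE'E : E' * E = 1)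
    (hF : F = A - C * B' * D) (hFF : F * F' = 1) :
    E' * (D * A') = B' * (D * F') := by
  have h1 : D * A' * C = B - E := by rw [hE, sub_sub_cancel]
  have key : D * A' * F = E * (B' * D) := by
    calc D * A' * F = D * (A' * A) - (D * A' * C) * (B' * D) := by rw [hF]; noncomm_ring
      _ = D * 1 - (B - E) * (B' * D) := by rw [hA', h1]
      _ = E * (B' * D) - ((B * B') * D - D) := by noncomm_ring
      _ = E * (B' * D) := by rw [hBB, one_mul, sub_self, sub_zero]
  calc E' * (D * A') = E' * (D * A' * (F * F')) := by rw [hFF, mul_one]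
    _ = E' * ((D * A' * F) * F') := by noncomm_ring
    _ = E' * (E * (B' * D) * F') := by rw [key]
    _ = (E' * E) * (B' * (D * F')) := by noncomm_ring
    _ = B' * (D * F') := by rw [hE'E, one_mul]

/-- Core rectangular cancellation. -/
lemma stmt14core {T K : ℕ} (a b : Matrix (Fin T) (Fin K) ℝ)
    (A' B' C D E' F' : Matrix (Fin K) (Fin K) ℝ)
    (hL2 : E' * (D * A') = B' * (D * F'))
    (hL1 : F' = A' + A' * (C * (E' * (D * A')))) :
    (b - a * (A' * C)) * (E' * (D * A')) + (a - b * (B' * D)) * F' = a * A' := by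
  have hL1X : F' - A' * (C * (E' * (D * A'))) = A' := by
    rw [hL1]; abel
  calc (b - a * (A' * C)) * (E' * (D * A')) + (a - b * (B' * D)) * F'
      = b * (E' * (D * A')) + a * (F' - A' * (C * (E' * (D * A')))) - b * (B' * (D * F')) := by
        simp only [Matrix.sub_mul, Matrix.mul_sub, Matrix.mul_assoc]
        abel
    _ = b * (B' * (D * F')) + a * A' - b * (B' * (D * F')) := by rw [hL1X, hL2]
    _ = a * A' := by abel
/-- with `ξc = X₋ M_{(ι,ξβ')}`, `ξd = X₋ M_{(ι,X')}`, `ξβ = X M_{Z₋'}`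
(`Z₋ = (ι', X₋')'`), `ĉ, d̂, β̂` the corresponding least-squares coefficient matrices and
`Φ̂ = (X₋ M_ι X₋')⁻¹ X₋ M_ι X'`, and assuming all inverted matrices are invertible, the
identity `M_ι X₋'(X₋ M_ι X₋')⁻¹ = ξβ'(ξβ ξβ')⁻¹ Φ̂' + ξd'(ξd ξd')⁻¹` holds and hence
`ĉ = d̂ + Φ̂ β̂` (the two three-step procedures of Adrian et al. (2013) coincide). -/
theorem stmt14 (N K T : ℕ)
    (X Xm : Matrix (Fin K) (Fin T) ℝ) (R : Matrix (Fin N) (Fin T) ℝ) :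
    let ι : Matrix (Fin 1) (Fin T) ℝ := Matrix.of fun _ _ => 1
    let Zm : Matrix (Fin 1 ⊕ Fin K) (Fin T) ℝ := Matrix.fromRows ι Xm
    let ξβ : Matrix (Fin K) (Fin T) ℝ := X * annih14 Zm
    let ξc : Matrix (Fin K) (Fin T) ℝ := Xm * annih14 (Matrix.fromRows ι ξβ)
    let ξd : Matrix (Fin K) (Fin T) ℝ := Xm * annih14 (Matrix.fromRows ι X)
    let chat : Matrix (Fin K) (Fin N) ℝ := (ξc * ξcᵀ)⁻¹ * ξc * Rᵀ
    let dhat : Matrix (Fin K) (Fin N) ℝ := (ξd * ξdᵀ)⁻¹ * ξd * Rᵀ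
    let bhat : Matrix (Fin K) (Fin N) ℝ := (ξβ * ξβᵀ)⁻¹ * ξβ * Rᵀ
    let Phihat : Matrix (Fin K) (Fin K) ℝ :=
      (Xm * annih14 ι * Xmᵀ)⁻¹ * (Xm * annih14 ι * Xᵀ)
    IsUnit (ι * ιᵀ).det →
    IsUnit (Zm * Zmᵀ).det →
    IsUnit (Matrix.fromRows ι ξβ * (Matrix.fromRows ι ξβ)ᵀ).det →
    IsUnit (Matrix.fromRows ι X * (Matrix.fromRows ι X)ᵀ).det →
    IsUnit (ξc * ξcᵀ).det →
    IsUnit (ξd * ξdᵀ).det →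
    IsUnit (ξβ * ξβᵀ).det →
    IsUnit (Xm * annih14 ι * Xmᵀ).det →
    annih14 ι * Xmᵀ * (Xm * annih14 ι * Xmᵀ)⁻¹ =
        ξβᵀ * (ξβ * ξβᵀ)⁻¹ * Phihatᵀ + ξdᵀ * (ξd * ξdᵀ)⁻¹ ∧
      chat = dhat + Phihat * bhat := by
  intro ι Zm ξβ ξc ξd chat dhat bhat Phihat
  intro h1 h2 h3 h4 h5 h6 h7 h8
  have dZm : Zm = Matrix.fromRows ι Xm := rfl
  have dξβ : ξβ = X * annih14 Zm := rfl
  have dξc : ξc = Xm * annih14 (Matrix.fromRows ι ξβ) := rfl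
  have dξd : ξd = Xm * annih14 (Matrix.fromRows ι X) := rfl
  have dchat : chat = (ξc * ξcᵀ)⁻¹ * ξc * Rᵀ := rfl
  have ddhat : dhat = (ξd * ξdᵀ)⁻¹ * ξd * Rᵀ := rfl
  have dbhat : bhat = (ξβ * ξβᵀ)⁻¹ * ξβ * Rᵀ := rfl
  have dPhi : Phihat = (Xm * annih14 ι * Xmᵀ)⁻¹ * (Xm * annih14 ι * Xᵀ) := rfl
  clear_value Phihat bhat dhat chat ξd ξc ξβ Zm ι
  set S := annih14 ι with hSdef
  clear_value S
  have hSt : Sᵀ = S := by rw [hSdef]; exact annih14_transpose ι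
  have hSS : S * S = S := by rw [hSdef]; exact annih14_idem ι h1
  -- Gram of Xm*S
  have hgram_m : Xm * S * (Xm * S)ᵀ = Xm * (S * Xmᵀ) := by
    rw [transpose_mul, hSt, midem14 Xm S Xmᵀ hSS]
  have h8' : IsUnit (Xm * (S * Xmᵀ)).det := by
    rw [← Matrix.mul_assoc]; exact h8
  -- annihilator of Zm
  have ann_Zm : annih14 Zm = S - S * (Xmᵀ * ((Xm * (S * Xmᵀ))⁻¹ * (Xm * S))) := by
    have h := annih14_fromRows ι Xm h1 (by rw [← dZm]; exact h2)
      (by rw [← hSdef, hgram_m]; exact h8')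
    rw [← dZm, ← hSdef] at h
    rw [h, hgram_m, transpose_mul, hSt]
    simp only [Matrix.mul_assoc]
  -- invertibility of X S Xᵀ
  have hgram_x : X * S * (X * S)ᵀ = X * (S * Xᵀ) := by
    rw [transpose_mul, hSt, midem14 X S Xᵀ hSS]
  have hIB : IsUnit (X * (S * Xᵀ)).det := by
    have h4' := h4
    haveI : Invertible (ι * ιᵀ) := (ι * ιᵀ).invertibleOfIsUnitDet h1
    rw [show (Matrix.fromRows ι X)ᵀ = Matrix.fromCols ιᵀ Xᵀ from transpose_fromRows ι X,
      fromRows_mul_fromCols, det_fromBlocks₁₁] at h4'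
    have e : X * Xᵀ - X * ιᵀ * ⅟(ι * ιᵀ) * (ι * Xᵀ) = X * (S * Xᵀ) := by
      rw [invOf_eq_nonsing_inv, hSdef]
      unfold annih14 proj14
      simp only [Matrix.mul_sub, Matrix.sub_mul, Matrix.mul_one, Matrix.one_mul,
        Matrix.mul_assoc]
    rw [e] at h4'
    exact ((Commute.all _ _).isUnit_mul_iff.mp h4').2
  -- annihilator of (ι, X)
  have ann_X : annih14 (Matrix.fromRows ι X)
      = S - S * (Xᵀ * ((X * (S * Xᵀ))⁻¹ * (X * S))) := by
    have h := annih14_fromRows ι X h1 h4 (by rw [← hSdef, hgram_x]; exact hIB)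
    rw [← hSdef] at h
    rw [h, hgram_x, transpose_mul, hSt]
    simp only [Matrix.mul_assoc]
  -- orthogonality of ξβ
  have hMzZ : annih14 Zm * Zmᵀ = 0 := annih14_mul_transpose Zm h2
  rw [show Zmᵀ = Matrix.fromCols ιᵀ Xmᵀ from by rw [dZm, transpose_fromRows],
    mul_fromCols] at hMzZ
  obtain ⟨z1, z2⟩ := fromCols_inj (hMzZ.trans (fromCols_zero).symm)
  have hξβXm : ξβ * Xmᵀ = 0 := by rw [dξβ, Matrix.mul_assoc, z2, Matrix.mul_zero]
  have hξβι : ξβ * ιᵀ = 0 := by rw [dξβ, Matrix.mul_assoc, z1, Matrix.mul_zero]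
  have hXmξβ : Xm * ξβᵀ = 0 := by
    have := congrArg Matrix.transpose hξβXm
    simpa [transpose_mul] using this
  have hξβS : ξβ * S = ξβ := by
    rw [hSdef]
    unfold annih14 proj14
    rw [Matrix.mul_sub, Matrix.mul_one, ← Matrix.mul_assoc, ← Matrix.mul_assoc, hξβι,
      Matrix.zero_mul, Matrix.zero_mul, sub_zero]
  -- ξc = Xm * S
  have ann_b : annih14 (Matrix.fromRows ι ξβ) = S - ξβᵀ * ((ξβ * ξβᵀ)⁻¹ * ξβ) := by
    have h := annih14_fromRows ι ξβ h1 h3 (by rw [← hSdef, hξβS]; exact h7)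
    rw [← hSdef, hξβS] at h
    rw [h, Matrix.mul_assoc]
  have hξc : ξc = Xm * S := by
    rw [dξc, ann_b, Matrix.mul_sub, ← Matrix.mul_assoc, hXmξβ, Matrix.zero_mul, sub_zero]
  have hξcG : ξc * ξcᵀ = Xm * (S * Xmᵀ) := by
    rw [hξc, transpose_mul, hSt, midem14 Xm S Xmᵀ hSS]
  -- explicit forms
  have hξβt : ξβᵀ = S * Xᵀ
      - S * Xmᵀ * ((Xm * (S * Xmᵀ))⁻¹ * (Xm * (S * Xᵀ))) := by
    rw [dξβ, transpose_mul, annih14_transpose, ann_Zm]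
    simp only [Matrix.sub_mul, Matrix.mul_assoc]
  have hξdt : ξdᵀ = S * Xmᵀ
      - S * Xᵀ * ((X * (S * Xᵀ))⁻¹ * (X * (S * Xmᵀ))) := by
    rw [dξd, transpose_mul, annih14_transpose, ann_X]
    simp only [Matrix.sub_mul, Matrix.mul_assoc]
  have hMz_idem : annih14 Zm * annih14 Zm = annih14 Zm := annih14_idem Zm h2
  have hMd_idem : annih14 (Matrix.fromRows ι X) * annih14 (Matrix.fromRows ι X)
      = annih14 (Matrix.fromRows ι X) := annih14_idem _ h4
  have hE : ξβ * ξβᵀ = X * (S * Xᵀ)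
      - X * (S * Xmᵀ) * ((Xm * (S * Xmᵀ))⁻¹ * (Xm * (S * Xᵀ))) := by
    have e1 : ξβ * ξβᵀ = X * (annih14 Zm * Xᵀ) := by
      rw [dξβ, transpose_mul, annih14_transpose, midem14 X (annih14 Zm) Xᵀ hMz_idem]
    rw [e1, ann_Zm]
    simp only [Matrix.sub_mul, Matrix.mul_sub, Matrix.mul_assoc]
  have hF : ξd * ξdᵀ = Xm * (S * Xmᵀ)
      - Xm * (S * Xᵀ) * ((X * (S * Xᵀ))⁻¹ * (X * (S * Xmᵀ))) := by
    have e1 : ξd * ξdᵀ = Xm * (annih14 (Matrix.fromRows ι X) * Xmᵀ) := by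
      rw [dξd, transpose_mul, annih14_transpose,
        midem14 Xm (annih14 (Matrix.fromRows ι X)) Xmᵀ hMd_idem]
    rw [e1, ann_X]
    simp only [Matrix.sub_mul, Matrix.mul_sub, Matrix.mul_assoc]
  -- Phihat transposed
  have hPhiT : Phihatᵀ = X * (S * Xmᵀ) * (Xm * (S * Xmᵀ))⁻¹ := by
    rw [dPhi]
    rw [transpose_mul, Matrix.transpose_nonsing_inv]
    simp only [transpose_mul, transpose_transpose, hSt, Matrix.mul_assoc]
  -- inverse identities
  have hAA : (Xm * (S * Xmᵀ)) * (Xm * (S * Xmᵀ))⁻¹ = 1 := Matrix.mul_nonsing_inv _ h8'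
  have hA'A : (Xm * (S * Xmᵀ))⁻¹ * (Xm * (S * Xmᵀ)) = 1 := Matrix.nonsing_inv_mul _ h8'
  have hBB' : (X * (S * Xᵀ)) * (X * (S * Xᵀ))⁻¹ = 1 := Matrix.mul_nonsing_inv _ hIB
  have hB'B : (X * (S * Xᵀ))⁻¹ * (X * (S * Xᵀ)) = 1 := Matrix.nonsing_inv_mul _ hIB
  have hEE' : (ξβ * ξβᵀ) * (ξβ * ξβᵀ)⁻¹ = 1 := Matrix.mul_nonsing_inv _ h7
  have hE'E : (ξβ * ξβᵀ)⁻¹ * (ξβ * ξβᵀ) = 1 := Matrix.nonsing_inv_mul _ h7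
  have hFF' : (ξd * ξdᵀ) * (ξd * ξdᵀ)⁻¹ = 1 := Matrix.mul_nonsing_inv _ h6
  have hEeq : ξβ * ξβᵀ = X * (S * Xᵀ)
      - X * (S * Xmᵀ) * (Xm * (S * Xmᵀ))⁻¹ * (Xm * (S * Xᵀ)) := by
    rw [hE, Matrix.mul_assoc (X * (S * Xmᵀ))]
  have hFeq : ξd * ξdᵀ = Xm * (S * Xmᵀ)
      - Xm * (S * Xᵀ) * (X * (S * Xᵀ))⁻¹ * (X * (S * Xmᵀ)) := by
    rw [hF, Matrix.mul_assoc (Xm * (S * Xᵀ))]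
  have hL1 := stmt14L1 (Xm * (S * Xmᵀ)) ((Xm * (S * Xmᵀ))⁻¹) (X * (S * Xᵀ))
    ((X * (S * Xᵀ))⁻¹) (Xm * (S * Xᵀ)) (X * (S * Xmᵀ)) (ξβ * ξβᵀ) ((ξβ * ξβᵀ)⁻¹)
    (ξd * ξdᵀ) hAA hB'B hEeq hEE' hFeq
  have hFinv : (ξd * ξdᵀ)⁻¹ = (Xm * (S * Xmᵀ))⁻¹
      + (Xm * (S * Xmᵀ))⁻¹ * ((Xm * (S * Xᵀ)) * ((ξβ * ξβᵀ)⁻¹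
          * ((X * (S * Xmᵀ)) * (Xm * (S * Xmᵀ))⁻¹))) :=
    Matrix.inv_eq_right_inv hL1
  have hL2 := stmt14L2 (Xm * (S * Xmᵀ)) ((Xm * (S * Xmᵀ))⁻¹) (X * (S * Xᵀ))
    ((X * (S * Xᵀ))⁻¹) (Xm * (S * Xᵀ)) (X * (S * Xmᵀ)) (ξβ * ξβᵀ) ((ξβ * ξβᵀ)⁻¹)
    (ξd * ξdᵀ) ((ξd * ξdᵀ)⁻¹) hA'A hBB' hEeq hE'E hFeq hFF'
  -- goal 1
  have hh := stmt14core (S * Xmᵀ) (S * Xᵀ) ((Xm * (S * Xmᵀ))⁻¹) ((X * (S * Xᵀ))⁻¹)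
    (Xm * (S * Xᵀ)) (X * (S * Xmᵀ)) ((ξβ * ξβᵀ)⁻¹) ((ξd * ξdᵀ)⁻¹) hL2 hFinv
  have key : S * Xmᵀ * (Xm * S * Xmᵀ)⁻¹
      = ξβᵀ * (ξβ * ξβᵀ)⁻¹ * Phihatᵀ + ξdᵀ * (ξd * ξdᵀ)⁻¹ := by
    generalize hEi : (ξβ * ξβᵀ)⁻¹ = Ei at hh ⊢
    generalize hFi : (ξd * ξdᵀ)⁻¹ = Fi at hh ⊢
    rw [hξβt, hξdt, hPhiT]
    simp only [Matrix.mul_assoc] at hh ⊢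
    exact hh.symm
  refine ⟨key, ?_⟩
  -- goal 2
  have keyT := congrArg Matrix.transpose key
  simp only [transpose_add, transpose_mul, transpose_transpose,
    Matrix.transpose_nonsing_inv, hSt, Matrix.mul_assoc] at keyT
  rw [dchat, ddhat, dbhat, hξcG, hξc]
  rw [keyT]
  simp only [Matrix.add_mul, Matrix.mul_assoc]
  abel
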